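/- For any dimension d ≥ 1, there exists an informationally complete POVM {E_i}_{i≤N_d} on C^d with N_d = d(2d-1) effects such that Tr(E_i · I/d) = 1/N_d for every effect E_i. -/

import Mathlib

open Matrix
open scoped ComplexOrder

/-- A density matrix on ℂ^d: positive semidefinite with unit trace. -/
def IsDensityMatrix {d : ℕ} (ρ : Matrix (Fin d) (Fin d) ℂ) : Prop :=
  ρ.PosSemidef ∧ ρ.trace = 1

/-- A POVM on ℂ^d with N effects: positive semidefinite operators summing to the identity. -/
def IsPOVM {d N : ℕ} (E : Fin N → Matrix (Fin d) (Fin d) ℂ) : Prop :=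
  (∀ i, (E i).PosSemidef) ∧ ∑ i, E i = 1

/-- Informationally complete: ρ ↦ (Tr(E_i ρ))_i is injective on density matrices. -/
def IsInfoComplete {d N : ℕ} (E : Fin N → Matrix (Fin d) (Fin d) ℂ) : Prop :=
  Set.InjOn (fun ρ : Matrix (Fin d) (Fin d) ℂ => fun i => (E i * ρ).trace)
    {ρ | IsDensityMatrix ρ}

/-!
Take the `d` projectors `|j⟩⟨j|` and, for every ordered pair `j ≠ k` and both signs, the
operators `½ |e_j ± ω e_k⟩⟨e_j ± ω e_k|` with `ω = 1` if `j < k` and `ω = i` otherwise: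
`d + 2d(d-1) = d(2d-1)` operators of trace one. By the parallelogram law the two signs of a
pair add up to `|j⟩⟨j| + |k⟩⟨k|`, so all of them sum to `(2d-1) • 1`, and dividing by `2d-1`
gives a POVM; its effects have equal traces, hence probability `1/N` each in the state `I/d`.
The difference of the two signs of the pair `(j, k)` measures `ω X_jk + ω̄ X_kj`, which for
`(j, k)` and `(k, j)` gives `X_jk + X_kj` and `i (X_kj - X_jk)`; with the diagonal entries
this determines `X`, so the measurement is injective on matrices, not only on states.
-/

section OffDiag

variable {n M : Type*} [Fintype n] [DecidableEq n] [AddCommMonoid M]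

theorem sum_offDiag_fst (f : n → M) :
    ∑ p : {p : n × n // p.1 ≠ p.2}, f p.1.1 = (Fintype.card n - 1) • ∑ j, f j := by
  rw [← Finset.sum_subtype {p | p.1 ≠ p.2} (by simp) (fun p : n × n => f p.1),
    Finset.sum_filter, Fintype.sum_prod_type, Finset.smul_sum]
  refine Finset.sum_congr rfl fun j _ => ?_
  rw [← Finset.sum_filter]
  simp [Finset.filter_ne]

theorem sum_offDiag_snd (f : n → M) :
    ∑ p : {p : n × n // p.1 ≠ p.2}, f p.1.2 = (Fintype.card n - 1) • ∑ j, f j := by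
  rw [← sum_offDiag_fst]
  exact Fintype.sum_equiv ((Equiv.prodComm n n).subtypeEquiv fun p => ne_comm) _ _ fun _ => rfl

omit [AddCommMonoid M] in
theorem card_offDiag :
    Fintype.card {p : n × n // p.1 ≠ p.2} = Fintype.card n * (Fintype.card n - 1) := by
  rw [Fintype.card_eq_sum_ones, sum_offDiag_fst (fun _ => 1), ← Fintype.card_eq_sum_ones,
    smul_eq_mul, mul_comm]

end OffDiag

section VecMulVec

variable {m n α : Type*}

theorem vecMulVec_add_add_vecMulVec_sub_sub [Ring α] (u w : m → α) (x y : n → α) :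
    vecMulVec (u + w) (x + y) + vecMulVec (u - w) (x - y)
      = (2 : α) • (vecMulVec u x + vecMulVec w y) := by
  simp only [add_vecMulVec, vecMulVec_add, sub_vecMulVec, vecMulVec_sub, two_smul]
  abel

theorem vecMulVec_add_add_sub_vecMulVec_sub_sub [Ring α] (u w : m → α) (x y : n → α) :
    vecMulVec (u + w) (x + y) - vecMulVec (u - w) (x - y)
      = (2 : α) • (vecMulVec u y + vecMulVec w x) := by
  simp only [add_vecMulVec, vecMulVec_add, sub_vecMulVec, vecMulVec_sub, two_smul]
  abel

theorem trace_vecMulVec_mul [Fintype m] [CommRing α] (u w : m → α) (X : Matrix m m α) :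
    (vecMulVec u w * X).trace = w ⬝ᵥ (X *ᵥ u) := by
  rw [vecMulVec_mul, trace_vecMulVec, dotProduct_comm, dotProduct_mulVec]

theorem vecMulVec_single_star_single [DecidableEq n] (j : n) :
    vecMulVec (Pi.single j 1 : n → ℂ) (star (Pi.single j 1)) = single j j 1 := by
  rw [Pi.star_single, star_one, single_eq_single_vecMulVec_single]

end VecMulVec

section POVM

variable {d N : ℕ}

theorem isPOVM_inv_smul {F : Fin N → Matrix (Fin d) (Fin d) ℂ} (hF : ∀ i, (F i).PosSemidef)
    {m : ℕ} (hm : m ≠ 0) (hsum : ∑ i, F i = m • 1) : IsPOVM fun i => (m : ℂ)⁻¹ • F i := by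
  refine ⟨fun i => (hF i).smul (by positivity), ?_⟩
  rw [← Finset.smul_sum, hsum, ← Nat.cast_smul_eq_nsmul ℂ, smul_smul,
    inv_mul_cancel₀ (Nat.cast_ne_zero.mpr hm), one_smul]

theorem isInfoComplete_of_forall_trace_mul_eq_zero {E : Fin N → Matrix (Fin d) (Fin d) ℂ}
    (h : ∀ X, (∀ i, (E i * X).trace = 0) → X = 0) : IsInfoComplete E := by
  intro ρ _ σ _ hρσ
  rw [← sub_eq_zero]
  refine h _ fun i => ?_
  rw [Matrix.mul_sub, trace_sub, sub_eq_zero]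
  exact congrFun hρσ i

theorem IsPOVM.trace_mul_smul_one_of_trace_eq {E : Fin N → Matrix (Fin d) (Fin d) ℂ}
    (hE : IsPOVM E) (hd : d ≠ 0) {t : ℂ} (ht : ∀ i, (E i).trace = t) (i : Fin N) :
    (E i * ((d : ℂ)⁻¹ • 1)).trace = (N : ℂ)⁻¹ := by
  have hNt : (N : ℂ) * t = d := by
    simpa [ht] using congrArg trace hE.2
  have hNt0 : (N : ℂ) * t ≠ 0 := hNt ▸ Nat.cast_ne_zero.mpr hd
  rw [Matrix.mul_smul, Matrix.mul_one, trace_smul, ht, smul_eq_mul, ← hNt, mul_inv, mul_assoc,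
    inv_mul_cancel₀ (right_ne_zero_of_mul hNt0), mul_one]

end POVM

namespace PairPOVM

variable {n : Type*} [LinearOrder n]

def phase (j k : n) : ℂ := if j < k then 1 else Complex.I

theorem norm_phase (j k : n) : ‖phase j k‖ = 1 := by
  unfold phase; split_ifs <;> simp

abbrev Index (n : Type*) := n ⊕ ({p : n × n // p.1 ≠ p.2} × Bool)

def pairVec (j k : n) : Bool → n → ℂ
  | true => Pi.single j 1 + phase j k • Pi.single k 1
  | false => Pi.single j 1 - phase j k • Pi.single k 1

noncomputable def effect : Index n → Matrix n n ℂ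
  | .inl j => vecMulVec (Pi.single j 1) (star (Pi.single j 1))
  | .inr (p, b) =>
    (2⁻¹ : ℂ) • vecMulVec (pairVec p.1.1 p.1.2 b) (star (pairVec p.1.1 p.1.2 b))

variable [Fintype n]

theorem effect_posSemidef (α : Index n) : (effect α).PosSemidef := by
  rcases α with j | ⟨p, b⟩
  · exact posSemidef_vecMulVec_self_star _
  · exact (posSemidef_vecMulVec_self_star _).smul (by positivity)

theorem trace_effect (α : Index n) : (effect α).trace = 1 := by
  rcases α with j | ⟨p, _ | _⟩
  · simp [effect, trace_vecMulVec, Pi.star_single]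
  all_goals
    simp [effect, pairVec, trace_vecMulVec, Pi.star_single, p.2, p.2.symm, Complex.conj_mul',
      norm_phase]
    norm_num

theorem sum_effect_inr (p : {p : n × n // p.1 ≠ p.2}) :
    ∑ b, effect (.inr (p, b)) = single p.1.1 p.1.1 1 + single p.1.2 p.1.2 (1 : ℂ) := by
  simp only [Fintype.sum_bool, effect, pairVec, ← smul_add, star_add, star_sub]
  rw [vecMulVec_add_add_vecMulVec_sub_sub, smul_smul, inv_mul_cancel₀ (two_ne_zero' ℂ), one_smul,
    star_smul, smul_vecMulVec, vecMulVec_smul, smul_smul, Complex.star_def, Complex.mul_conj',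
    norm_phase, Complex.ofReal_one, one_pow, one_smul,
    vecMulVec_single_star_single, vecMulVec_single_star_single]

theorem sum_effect [Nonempty n] :
    ∑ α, effect α = (2 * Fintype.card n - 1) • (1 : Matrix n n ℂ) := by
  have hcard : 1 + 2 * (Fintype.card n - 1) = 2 * Fintype.card n - 1 := by
    have := Fintype.card_pos (α := n)
    omega
  have hbasis : ∑ j, effect (.inl j : Index n) = 1 := by
    simp only [effect, vecMulVec_single_star_single, sum_single_one]
  rw [Fintype.sum_sum_type, Fintype.sum_prod_type, hbasis]
  simp only [sum_effect_inr, Finset.sum_add_distrib, sum_offDiag_fst (fun j => single j j (1 : ℂ)),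
    sum_offDiag_snd (fun j => single j j (1 : ℂ)), sum_single_one]
  rw [← hcard, add_smul, one_smul, two_mul, add_smul]

theorem card_index : Fintype.card (Index n) = Fintype.card n * (2 * Fintype.card n - 1) := by
  rw [Fintype.card_sum, Fintype.card_prod, card_offDiag, Fintype.card_bool]
  rcases Fintype.card n with _ | N
  · rfl
  · rw [Nat.add_sub_cancel, show 2 * (N + 1) - 1 = 2 * N + 1 by omega]
    ring

theorem trace_effect_inl_mul (j : n) (X : Matrix n n ℂ) :
    (effect (.inl j) * X).trace = X j j := by
  simp [effect, trace_vecMulVec_mul, Pi.star_single]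

theorem trace_effect_inr_sub (p : {p : n × n // p.1 ≠ p.2}) (X : Matrix n n ℂ) :
    (effect (.inr (p, true)) * X).trace - (effect (.inr (p, false)) * X).trace
      = phase p.1.1 p.1.2 * X p.1.1 p.1.2 + star (phase p.1.1 p.1.2) * X p.1.2 p.1.1 := by
  simp only [effect, pairVec, smul_mul_assoc, trace_smul, ← smul_sub, ← trace_sub,
    ← Matrix.sub_mul, star_add, star_sub, vecMulVec_add_add_sub_vecMulVec_sub_sub]
  rw [smul_smul, inv_mul_cancel₀ two_ne_zero, one_smul, Matrix.add_mul, trace_add,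
    trace_vecMulVec_mul, trace_vecMulVec_mul]
  simp only [star_smul, RCLike.star_def, Pi.star_single, star_one, mulVec_single,
    MulOpposite.op_one, one_smul, smul_dotProduct, single_dotProduct, col_apply, one_mul,
    smul_eq_mul, mulVec_smul, dotProduct_smul]
  ring

theorem apply_eq_zero_of_forall_trace_effect_mul_eq_zero {X : Matrix n n ℂ}
    (h : ∀ α, (effect α * X).trace = 0) {a b : n} (hab : a < b) : X a b = 0 ∧ X b a = 0 := by
  have hsym := trace_effect_inr_sub ⟨(a, b), hab.ne⟩ X
  have hanti := trace_effect_inr_sub ⟨(b, a), hab.ne'⟩ X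
  simp only [h, sub_self, phase, if_pos hab, if_neg hab.not_gt, one_mul, star_one,
    RCLike.star_def, Complex.conj_I, neg_mul] at hsym hanti
  constructor
  · linear_combination -(hsym + Complex.I * hanti) / 2 + (X a b - X b a) / 2 * Complex.I_mul_I
  · linear_combination -(hsym - Complex.I * hanti) / 2 - (X a b - X b a) / 2 * Complex.I_mul_I

theorem eq_zero_of_forall_trace_effect_mul_eq_zero {X : Matrix n n ℂ}
    (h : ∀ α, (effect α * X).trace = 0) : X = 0 := by
  ext a b
  rcases lt_trichotomy a b with hab | rfl | hab
  · exact (apply_eq_zero_of_forall_trace_effect_mul_eq_zero h hab).1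
  · exact (trace_effect_inl_mul a X).symm.trans (h _)
  · exact (apply_eq_zero_of_forall_trace_effect_mul_eq_zero h hab).2

end PairPOVM

/-- for any d ≥ 1 there is an informationally complete POVM with
N_d = d(2d-1) effects satisfying Tr(E_i · I/d) = 1/N_d for every effect. -/
theorem exists_infoComplete_unbiased_POVM (d : ℕ) (hd : 1 ≤ d) :
    ∃ E : Fin (d * (2 * d - 1)) → Matrix (Fin d) (Fin d) ℂ,
      IsPOVM E ∧ IsInfoComplete E ∧
      ∀ i, (E i * (((d : ℂ)⁻¹) • (1 : Matrix (Fin d) (Fin d) ℂ))).trace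
            = ((d * (2 * d - 1) : ℕ) : ℂ)⁻¹ := by
  have : Nonempty (Fin d) := Fin.pos_iff_nonempty.mp hd
  let e : Fin (d * (2 * d - 1)) ≃ PairPOVM.Index (Fin d) :=
    (Fintype.equivFinOfCardEq (by rw [PairPOVM.card_index, Fintype.card_fin])).symm
  have hm : 2 * d - 1 ≠ 0 := by omega
  have hE : IsPOVM fun i => ((2 * d - 1 : ℕ) : ℂ)⁻¹ • PairPOVM.effect (e i) :=
    isPOVM_inv_smul (fun i => PairPOVM.effect_posSemidef (e i)) hm
      (by rw [e.sum_comp PairPOVM.effect, PairPOVM.sum_effect, Fintype.card_fin])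
  have htrace (i) :
      (((2 * d - 1 : ℕ) : ℂ)⁻¹ • PairPOVM.effect (e i)).trace = ((2 * d - 1 : ℕ) : ℂ)⁻¹ := by
    rw [trace_smul, PairPOVM.trace_effect, smul_eq_mul, mul_one]
  refine ⟨_, hE, isInfoComplete_of_forall_trace_mul_eq_zero fun X hX => ?_,
    hE.trace_mul_smul_one_of_trace_eq (by omega) htrace⟩
  refine PairPOVM.eq_zero_of_forall_trace_effect_mul_eq_zero fun α => ?_
  simpa [hm, smul_mul_assoc] using hX (e.symm α)
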